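/- The inverse Newton polynomial dual basis pencil L_in(s) — the d×(d+1) matrix with L_in(1,1) = ξ_1, L_in(1,2) = σ_1−s, and for k ≥ 2, L_in(k, k) = ξ_k, L_in(k, k+1) = ξ_{k−1}(σ_k−s), zeros elsewhere — annihilates the basis Φ(s) = (1, ξ_1/(s−σ_1), ξ_2/((s−σ_1)(s−σ_2)), …, ξ_d/((s−σ_1)⋯(s−σ_d)))ᵀ, i.e., L_in(s)·Φ(s) = 0, and L_in(s) has full row rank for all s ∈ ℂ. -/

import Mathlib

open Matrix

/-- The inverse-Newton-polynomial dual basis pencil `L_in(s)` annihilates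
`Φ(s) = (1, ξ_1/(s−σ_1), ξ_2/((s−σ_1)(s−σ_2)), …)ᵀ` and has full row rank `d`
for all `s`. -/
theorem inverse_newton_dual_basis {d : ℕ} (σ ξ : Fin d → ℂ)
    (hξ : ∀ k, ξ k ≠ 0) (s : ℂ) :
    let L : Matrix (Fin d) (Fin (d + 1)) ℂ :=
      Matrix.of fun k j =>
        if (j : ℕ) = (k : ℕ) then ξ k
        else if (j : ℕ) = (k : ℕ) + 1 then
          (if (k : ℕ) = 0 then σ k - s
           else ξ ⟨(k : ℕ) - 1, Nat.lt_of_le_of_lt (Nat.sub_le _ _) k.isLt⟩ * (σ k - s))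
        else 0
    let Φ : Fin (d + 1) → ℂ :=
      Fin.cases 1 (fun i => ξ i / ∏ l ∈ Finset.Iic i, (s - σ l))
    (s ∉ Set.range σ → L.mulVec Φ = 0) ∧ L.rank = d := by
  intro L Φ
  constructor
  · -- annihilation
    intro hs
    have hsσ : ∀ l : Fin d, s - σ l ≠ 0 := by
      intro l h
      exact hs ⟨l, by linear_combination -h⟩
    have hprod : ∀ i : Fin d, (∏ l ∈ Finset.Iic i, (s - σ l)) ≠ 0 :=
      fun i => Finset.prod_ne_zero_iff.mpr fun l _ => hsσ l
    funext k
    have hsplit : ∀ j : Fin (d + 1), L k j * Φ j =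
        (if j = Fin.castSucc k then
          ξ k * Φ (Fin.castSucc k) else 0) +
        (if j = Fin.succ k then
          (if (k : ℕ) = 0 then σ k - s
           else ξ ⟨(k : ℕ) - 1, Nat.lt_of_le_of_lt (Nat.sub_le _ _) k.isLt⟩ * (σ k - s))
            * Φ (Fin.succ k) else 0) := by
      intro j
      by_cases h1 : j = Fin.castSucc k
      · subst h1
        simp [L, Matrix.of_apply, Fin.val_ne_of_ne,
          show ((Fin.castSucc k : Fin (d+1)) : ℕ) = (k : ℕ) from rfl,
          (Fin.castSucc_lt_succ (i := k)).ne]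
      · by_cases h2 : j = Fin.succ k
        · subst h2
          have : ((Fin.succ k : Fin (d+1)) : ℕ) = (k : ℕ) + 1 := rfl
          simp [L, Matrix.of_apply, this, h1]
        · have hj1 : (j : ℕ) ≠ (k : ℕ) := fun h => h1 (Fin.ext h)
          have hj2 : (j : ℕ) ≠ (k : ℕ) + 1 := fun h => h2 (Fin.ext h)
          simp [L, Matrix.of_apply, hj1, hj2, h1, h2]
    have : L.mulVec Φ k = ξ k * Φ (Fin.castSucc k) +
        (if (k : ℕ) = 0 then σ k - s
         else ξ ⟨(k : ℕ) - 1, Nat.lt_of_le_of_lt (Nat.sub_le _ _) k.isLt⟩ * (σ k - s))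
          * Φ (Fin.succ k) := by
      rw [Matrix.mulVec, dotProduct]
      simp only [hsplit]
      rw [Finset.sum_add_distrib, Finset.sum_ite_eq' _ (Fin.castSucc k),
        Finset.sum_ite_eq' _ (Fin.succ k)]
      simp
    rw [this, Pi.zero_apply]
    obtain ⟨kv, hk⟩ := k
    match kv with
    | 0 =>
      have h0 : (Fin.castSucc (⟨0, hk⟩ : Fin d)) = (0 : Fin (d+1)) := rfl
      simp only [h0, Fin.cases_zero, Fin.cases_succ, Φ, if_pos rfl]
      have := hsσ ⟨0, hk⟩
      have hIic : Finset.Iic (⟨0, hk⟩ : Fin d) = {⟨0, hk⟩} := by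
        ext l
        simp only [Finset.mem_Iic, Finset.mem_singleton, Fin.le_def, Fin.ext_iff]
        omega
      rw [hIic, Finset.prod_singleton]
      simp only [Fin.val_mk, eq_self_iff_true, if_true]
      field_simp
      ring
    | m + 1 =>
      have hm : m < d := by omega
      have hcs : (Fin.castSucc (⟨m + 1, hk⟩ : Fin d)) = Fin.succ ⟨m, hm⟩ := rfl
      simp only [hcs, Fin.cases_succ, Φ, if_neg (Nat.succ_ne_zero m)]
      have hIic : Finset.Iic (⟨m + 1, hk⟩ : Fin d) =
          insert (⟨m + 1, hk⟩ : Fin d) (Finset.Iic (⟨m, hm⟩ : Fin d)) := by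
        ext l
        simp only [Finset.mem_Iic, Finset.mem_insert, Fin.le_def, Fin.ext_iff]
        omega
      have hnotmem : (⟨m + 1, hk⟩ : Fin d) ∉ Finset.Iic (⟨m, hm⟩ : Fin d) := by
        simp [Fin.le_def]
      rw [hIic, Finset.prod_insert hnotmem]
      have hP := hprod ⟨m, hm⟩
      have hS := hsσ ⟨m + 1, hk⟩
      have hidx : (⟨(⟨m + 1, hk⟩ : Fin d).val - 1, _⟩ : Fin d) = ⟨m, hm⟩ := rfl
      simp only [hidx]
      field_simp
      ring
  · -- rank
    classical
    -- E : (d+1) × d inclusion matrix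
    set E : Matrix (Fin (d + 1)) (Fin d) ℂ :=
      Matrix.of fun i j => if i = Fin.castSucc j then 1 else 0 with hE
    have hLE : ∀ k j, (L * E) k j = L k (Fin.castSucc j) := by
      intro k j
      rw [Matrix.mul_apply]
      simp [hE, eq_comm]
    have hBT : (L * E).BlockTriangular id := by
      intro i j hij
      rw [hLE]
      have h1 : ((Fin.castSucc j : Fin (d+1)) : ℕ) ≠ (i : ℕ) := by
        simp only [Fin.coe_castSucc]
        exact fun h => absurd (Fin.ext h : j = i) (ne_of_lt hij)
      have h2 : ((Fin.castSucc j : Fin (d+1)) : ℕ) ≠ (i : ℕ) + 1 := by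
        simp only [Fin.coe_castSucc]
        have : (j : ℕ) < (i : ℕ) := hij
        omega
      rw [Fin.coe_castSucc] at h1 h2
      simp only [L, Matrix.of_apply, Fin.coe_castSucc, if_neg h1, if_neg h2]
    have hdet : (L * E).det = ∏ i : Fin d, ξ i := by
      rw [Matrix.det_of_upperTriangular hBT]
      refine Finset.prod_congr rfl fun i _ => ?_
      rw [hLE]
      simp [L, Matrix.of_apply]
    have hunit : IsUnit (L * E) := by
      rw [Matrix.isUnit_iff_isUnit_det, hdet, isUnit_iff_ne_zero]
      exact Finset.prod_ne_zero_iff.mpr fun i _ => hξ i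
    have h1 : (L * E).rank = d := by
      rw [Matrix.rank_of_isUnit _ hunit, Fintype.card_fin]
    have h2 : (L * E).rank ≤ L.rank := Matrix.rank_mul_le_left L E
    have h3 : L.rank ≤ d := by
      have := Matrix.rank_le_card_height L
      simpa using this
    omega
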